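/- arXiv:2109.09400 — 2 statements merged into one kernel-verified Lean document; each statement's English description precedes it below -/
import Mathlib

section
/- Let Z ⊆ U_r and let Z° denote the set of all freely reduced words in F_r whose cyclically reduced forms belong to Z. If Z is exponentially negligible in U_r then Z° is exponentially negligible in F_r. -/
/-!
A word whose cyclically reduced form is `u` is `g u g⁻¹` with no cancellation, of length
`|u| + 2|g|`, so `ρ_n(Z°) ≤ ∑_{2k ≤ n} |S_k| ρ_{n-2k}(Z)` with `S_k` the sphere of radius `k`.
Reduced words are chains of letters in which every letter has exactly `q = 2r - 1` admissible
successors, whence `|S_k| ≤ 2q^k` and `q^n ≤ ρ_n(F_r) ≤ 4q^n`. The hypothesis gives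
`ρ_m(Z) ≤ C σ^m q^m`, and enlarging `σ` to at least `5/6` ensures `σ²q ≥ 2` since `q ≥ 3`. Then
the `k`-th term is at most `2C (σq)^n 2^{-k}`: the `2k` letters of the conjugator cost a factor
`q^{-k}` in the count, more than the `σ^{-2k}` lost in the bound for `Z`. Summing the geometric
series, `ρ_n(Z°) ≤ 4C σ^n q^n ≤ 4C σ^n ρ_n(F_r)`.
-/

open scoped Classical

noncomputable section

/-- The free group of rank `r`, with free basis indexed by `Fin r`. -/
abbrev F (r : ℕ) := FreeGroup (Fin r)

/-- The freely reduced length of an element of the free group. -/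
def wlen {r : ℕ} (w : F r) : ℕ := (FreeGroup.toWord w).length

/-- An element is cyclically reduced if the first letter of its reduced word is not the
inverse of the last letter. -/
def CyclicallyReduced {r : ℕ} (w : F r) : Prop :=
  ∀ x ∈ (FreeGroup.toWord w).head?, ∀ y ∈ (FreeGroup.toWord w).getLast?, x ≠ (y.1, !y.2)

/-- The set of cyclically reduced elements of `F r`. -/
def Ur (r : ℕ) : Set (F r) := {w | CyclicallyReduced w}

/-- An element of a group is primitive if it belongs to some free basis of the group. -/
def IsPrimitive {G : Type} [Group G] (g : G) : Prop :=
  ∃ (ι : Type) (b : FreeGroupBasis ι G) (i : ι), b i = g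

/-- `HasRank G n` says that `G` is free of rank `n` (with `n = ⊤` for infinite rank). -/
def HasRank (G : Type) [Group G] (n : ℕ∞) : Prop :=
  ∃ (ι : Type) (_b : FreeGroupBasis ι G), Cardinal.toENat (Cardinal.mk ι) = n

/-- The primitivity rank of `g`: the smallest rank of a subgroup containing `g` as a
non-primitive element (`⊤ = ∞` if there is none). -/
def primitivityRank {r : ℕ} (g : F r) : ℕ∞ :=
  sInf {n : ℕ∞ | ∃ (H : Subgroup (F r)) (hg : g ∈ H),
    ¬ IsPrimitive (⟨g, hg⟩ : H) ∧ HasRank H n}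

/-- The critical set of `g`: subgroups containing `g` as a non-primitive element whose rank
equals the primitivity rank of `g`. -/
def Crit {r : ℕ} (g : F r) : Set (Subgroup (F r)) :=
  {H | ∃ hg : g ∈ H, ¬ IsPrimitive (⟨g, hg⟩ : H) ∧ HasRank H (primitivityRank g)}

/-- `gam S n` is the number of elements of `S` of reduced length exactly `n`. -/
def gam {r : ℕ} (S : Set (F r)) (n : ℕ) : ℕ := {w ∈ S | wlen w = n}.ncard

/-- `rho S n` is the number of elements of `S` of reduced length at most `n`. -/
def rho {r : ℕ} (S : Set (F r)) (n : ℕ) : ℕ := {w ∈ S | wlen w ≤ n}.ncard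

/-- A sequence of reals converges to `l` exponentially fast. -/
def ExpFast (x : ℕ → ℝ) (l : ℝ) : Prop :=
  ∃ C : ℝ, 0 < C ∧ ∃ σ : ℝ, 0 < σ ∧ σ < 1 ∧ ∀ n : ℕ, |x n - l| ≤ C * σ ^ n

/-- `S` is exponentially negligible in `Z`. -/
def ExpNegligibleIn {r : ℕ} (S Z : Set (F r)) : Prop :=
  ExpFast (fun n => (rho S n : ℝ) / (rho Z n : ℝ)) 0

/-- `S` is exponentially generic in `Z`. -/
def ExpGenericIn {r : ℕ} (S Z : Set (F r)) : Prop :=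
  ExpNegligibleIn (Z \ S) Z

/-- `u` is the cyclically reduced form of `w`: `u` is cyclically reduced, conjugate to `w`
via `w = g u g⁻¹`, with no cancellation (`|w| = |u| + 2|g|`), as produced by cyclic reduction. -/
def IsCyclicallyReducedFormOf {r : ℕ} (u w : F r) : Prop :=
  CyclicallyReduced u ∧ ∃ g : F r, w = g * u * g⁻¹ ∧ wlen w = wlen u + 2 * wlen g

/-- `Zcirc Z` is the set of all elements of `F r` whose cyclically reduced form lies in `Z`. -/
def Zcirc {r : ℕ} (Z : Set (F r)) : Set (F r) :=
  {w | ∃ u ∈ Z, IsCyclicallyReducedFormOf u w}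


section Chains

open Finset

variable {α : Type*} [Fintype α] [DecidableEq α] (R : α → α → Prop) [DecidableRel R]

def chainsFrom (a : α) : ℕ → Finset (List α)
  | 0 => {[a]}
  | k + 1 => (univ.filter (R a)).biUnion fun b => (chainsFrom b k).image (a :: ·)

variable {R}

theorem mem_chainsFrom {a : α} {k : ℕ} {l : List α} :
    l ∈ chainsFrom R a k ↔ l.IsChain R ∧ l.head? = some a ∧ l.length = k + 1 := by
  induction k generalizing a l with
  | zero =>
    rcases l with _ | ⟨b, _ | ⟨c, l⟩⟩ <;> simp [chainsFrom, eq_comm]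
  | succ k ih =>
    rcases l with _ | ⟨b, _ | ⟨c, l⟩⟩
    · simp [chainsFrom]
    · simp [chainsFrom, ih]
    · simp only [chainsFrom, mem_biUnion, mem_filter, mem_univ, true_and, mem_image, ih,
        List.isChain_cons_cons]
      grind

theorem card_chainsFrom {q : ℕ} (hR : ∀ a, (univ.filter (R a)).card = q) (a : α) (k : ℕ) :
    (chainsFrom R a k).card = q ^ k := by
  induction k generalizing a with
  | zero => rfl
  | succ k ih =>
    rw [chainsFrom, card_biUnion, sum_congr rfl fun b _ => ?_, sum_const, hR, smul_eq_mul,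
      pow_succ']
    · rw [card_image_of_injective _ List.cons_injective, ih]
    · intro b _ c _ hbc
      simp only [Function.onFun, disjoint_left, mem_image]
      rintro _ ⟨l, hl, rfl⟩ ⟨m, hm, hlm⟩
      rw [mem_chainsFrom] at hl hm
      grind

variable (R) in
def chains (k : ℕ) : Finset (List α) := univ.biUnion (chainsFrom R · k)

theorem mem_chains {k : ℕ} {l : List α} : l ∈ chains R k ↔ l.IsChain R ∧ l.length = k + 1 := by
  rcases l with _ | ⟨a, l⟩ <;> simp [chains, mem_chainsFrom]

theorem card_chains {q : ℕ} (hR : ∀ a, (univ.filter (R a)).card = q) (k : ℕ) :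
    (chains R k).card = Fintype.card α * q ^ k := by
  rw [chains, card_biUnion, sum_congr rfl fun a _ => card_chainsFrom hR a k, sum_const, card_univ,
    smul_eq_mul]
  intro a _ b _ hab
  simp only [Function.onFun, disjoint_left, mem_chainsFrom]
  grind

end Chains

section WordCount

open Finset FreeGroup

variable {α : Type*} [Fintype α] [DecidableEq α]

theorem card_filter_isReduced_adj (a : α × Bool) :
    (univ.filter fun b : α × Bool => a.1 = b.1 → a.2 = b.2).card = 2 * Fintype.card α - 1 := by
  have : (univ.filter fun b : α × Bool => a.1 = b.1 → a.2 = b.2) = univ.erase (a.1, !a.2) := by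
    ext ⟨x, s⟩
    obtain ⟨y, t⟩ := a
    simp only [mem_filter, mem_univ, true_and, mem_erase, ne_eq, Prod.mk.injEq]
    cases s <;> cases t <;> tauto
  rw [this, card_erase_of_mem (mem_univ _), card_univ, Fintype.card_prod, Fintype.card_bool,
    mul_comm]

theorem ncard_setOf_toWord_length_succ (k : ℕ) :
    {x : FreeGroup α | x.toWord.length = k + 1}.ncard =
      2 * Fintype.card α * (2 * Fintype.card α - 1) ^ k := by
  have hwords : {x : FreeGroup α | x.toWord.length = k + 1} =
      toWord ⁻¹' chains (fun a b : α × Bool => a.1 = b.1 → a.2 = b.2) k := by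
    ext x
    rw [Set.mem_preimage, mem_coe, mem_chains]
    exact ⟨fun h => ⟨isReduced_toWord, h⟩, And.right⟩
  rw [hwords, Set.ncard_preimage_of_injective_subset_range toWord_injective, Set.ncard_coe_finset,
    card_chains card_filter_isReduced_adj, Fintype.card_prod, Fintype.card_bool, mul_comm _ 2]
  intro L hL
  exact ⟨mk L, by rw [toWord_mk, IsReduced.reduce_eq (mem_chains.1 hL).1]⟩

end WordCount

section Growth

variable {r : ℕ}

theorem finite_setOf_wlen_le (n : ℕ) : {w : F r | wlen w ≤ n}.Finite :=
  (List.finite_length_le _ n).preimage FreeGroup.toWord_injective.injOn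

theorem gam_le_rho (S : Set (F r)) (n : ℕ) : gam S n ≤ rho S n :=
  Set.ncard_le_ncard (fun _ hw => ⟨hw.1, hw.2.le⟩)
    ((finite_setOf_wlen_le n).subset fun _ hw => hw.2)

theorem rho_mono {S T : Set (F r)} (hST : S ⊆ T) (n : ℕ) : rho S n ≤ rho T n :=
  Set.ncard_le_ncard (fun _ hw => ⟨hST hw.1, hw.2⟩)
    ((finite_setOf_wlen_le n).subset fun _ hw => hw.2)

theorem rho_zero (S : Set (F r)) : rho S 0 = gam S 0 := by
  simp only [rho, gam, Nat.le_zero]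

theorem rho_succ (S : Set (F r)) (n : ℕ) : rho S (n + 1) = rho S n + gam S (n + 1) := by
  have hsplit : {w ∈ S | wlen w ≤ n + 1} = {w ∈ S | wlen w ≤ n} ∪ {w ∈ S | wlen w = n + 1} := by
    simp_rw [Nat.le_succ_iff, Set.sep_or]
  rw [rho, hsplit, Set.ncard_union_eq (Set.disjoint_left.2 fun w hw hw' => by grind)
    ((finite_setOf_wlen_le n).subset fun _ hw => hw.2)
    ((finite_setOf_wlen_le (n + 1)).subset fun _ hw => hw.2.le)]
  rfl

theorem rho_pos_of_one_mem {S : Set (F r)} (hS : 1 ∈ S) (n : ℕ) : 0 < rho S n :=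
  (Set.ncard_pos ((finite_setOf_wlen_le n).subset fun _ hw => hw.2)).2
    ⟨1, hS, by simp [wlen]⟩

theorem one_mem_Ur : (1 : F r) ∈ Ur r := by
  simp [Ur, CyclicallyReduced]

theorem gam_univ_zero : gam (Set.univ : Set (F r)) 0 = 1 := by
  simp [gam, wlen]

theorem gam_univ_succ (k : ℕ) : gam (Set.univ : Set (F r)) (k + 1) = 2 * r * (2 * r - 1) ^ k := by
  simpa [gam, wlen] using ncard_setOf_toWord_length_succ (α := Fin r) k

theorem pow_le_gam_univ (n : ℕ) : (2 * r - 1) ^ n ≤ gam (Set.univ : Set (F r)) n := by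
  rcases n with _ | k
  · simp [gam_univ_zero]
  · rw [gam_univ_succ, pow_succ']
    exact Nat.mul_le_mul_right _ (by omega)

theorem gam_univ_le (n : ℕ) : gam (Set.univ : Set (F r)) n ≤ 2 * (2 * r - 1) ^ n := by
  rcases n with _ | k
  · simp [gam_univ_zero]
  · rw [gam_univ_succ, pow_succ', ← mul_assoc]
    exact Nat.mul_le_mul_right _ (by omega)

theorem rho_univ_le (hr : 2 ≤ r) (n : ℕ) : rho (Set.univ : Set (F r)) n ≤ 4 * (2 * r - 1) ^ n := by
  induction n with
  | zero => simp [rho_zero, gam_univ_zero]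
  | succ n ih =>
    have := gam_univ_le (r := r) (n + 1)
    have : 2 * (2 * r - 1) ^ n ≤ (2 * r - 1) ^ (n + 1) := by
      rw [pow_succ']; exact Nat.mul_le_mul_right _ (by omega)
    rw [rho_succ]
    omega

end Growth

open Finset in
theorem rho_Zcirc_le {r : ℕ} (Z : Set (F r)) (n : ℕ) :
    rho (Zcirc Z) n ≤
      ∑ k ∈ range (n / 2 + 1), gam (Set.univ : Set (F r)) k * rho Z (n - 2 * k) := by
  let pairs (k : ℕ) : Set (F r × F r) := {g ∈ Set.univ | wlen g = k} ×ˢ {u ∈ Z | wlen u ≤ n - 2 * k}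
  let conj (p : F r × F r) : F r := p.1 * p.2 * p.1⁻¹
  have hpairs (k : ℕ) : (pairs k).Finite :=
    ((finite_setOf_wlen_le k).subset fun _ hg => hg.2.le).prod
      ((finite_setOf_wlen_le _).subset fun _ hu => hu.2)
  have hcover : {w ∈ Zcirc Z | wlen w ≤ n} ⊆ ⋃ k ∈ range (n / 2 + 1), conj '' pairs k := by
    rintro w ⟨⟨u, hu, -, g, rfl, hlen⟩, hn⟩
    exact Set.mem_biUnion (x := wlen g) (mem_range.2 (by omega))
      ⟨(g, u), ⟨⟨trivial, rfl⟩, hu, show wlen u ≤ _ by omega⟩, rfl⟩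
  calc rho (Zcirc Z) n ≤ (⋃ k ∈ range (n / 2 + 1), conj '' pairs k).ncard :=
        Set.ncard_le_ncard hcover ((finite_toSet _).biUnion fun k _ => (hpairs k).image _)
    _ ≤ ∑ k ∈ range (n / 2 + 1), (conj '' pairs k).ncard := set_ncard_biUnion_le _ _
    _ ≤ ∑ k ∈ range (n / 2 + 1), (pairs k).ncard :=
        sum_le_sum fun k _ => Set.ncard_image_le (hpairs k)
    _ = ∑ k ∈ range (n / 2 + 1), gam (Set.univ : Set (F r)) k * rho Z (n - 2 * k) := by
        simp only [pairs, Set.ncard_prod, gam, rho]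

theorem expNegligibleIn_iff {r : ℕ} {S T : Set (F r)} (hT : ∀ n, 0 < rho T n) :
    ExpNegligibleIn S T ↔ ∃ C : ℝ, 0 < C ∧ ∃ σ : ℝ, 0 < σ ∧ σ < 1 ∧
      ∀ n, (rho S n : ℝ) ≤ C * σ ^ n * rho T n := by
  have hbound (C σ : ℝ) (n : ℕ) :
      |(rho S n : ℝ) / rho T n - 0| ≤ C * σ ^ n ↔ (rho S n : ℝ) ≤ C * σ ^ n * rho T n := by
    rw [sub_zero, abs_of_nonneg (by positivity), div_le_iff₀ (by exact_mod_cast hT n)]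
  simp only [ExpNegligibleIn, ExpFast, hbound]

theorem pow_mul_pow_sub_le {q c : ℝ} (hq : 0 ≤ q) (hc : 0 ≤ c) (hqc : 2 * q ≤ c ^ 2) {k n : ℕ}
    (hkn : 2 * k ≤ n) : q ^ k * c ^ (n - 2 * k) ≤ (1 / 2) ^ k * c ^ n :=
  calc q ^ k * c ^ (n - 2 * k) = (1 / 2) ^ k * ((2 * q) ^ k * c ^ (n - 2 * k)) := by
        rw [mul_pow, ← mul_assoc, ← mul_assoc, ← mul_pow]; norm_num
    _ ≤ (1 / 2) ^ k * ((c ^ 2) ^ k * c ^ (n - 2 * k)) := by gcongr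
    _ = (1 / 2) ^ k * c ^ n := by rw [← pow_mul, ← pow_add, Nat.add_sub_cancel' hkn]

open Finset in
theorem rho_Zcirc_le_of_rho_le {r : ℕ} (Z : Set (F r)) {C c : ℝ} (hC : 0 ≤ C) (hc : 0 ≤ c)
    (hcr : 2 * ((2 * r - 1 : ℕ) : ℝ) ≤ c ^ 2) (hZ : ∀ m, (rho Z m : ℝ) ≤ C * c ^ m) (n : ℕ) :
    (rho (Zcirc Z) n : ℝ) ≤ 4 * C * c ^ n :=
  calc (rho (Zcirc Z) n : ℝ)
      ≤ ∑ k ∈ range (n / 2 + 1), (gam (Set.univ : Set (F r)) k : ℝ) * rho Z (n - 2 * k) := by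
        exact_mod_cast rho_Zcirc_le Z n
    _ ≤ ∑ k ∈ range (n / 2 + 1), 2 * C * (((2 * r - 1 : ℕ) : ℝ) ^ k * c ^ (n - 2 * k)) := by
        refine sum_le_sum fun k _ => ?_
        calc (gam (Set.univ : Set (F r)) k : ℝ) * rho Z (n - 2 * k)
            ≤ 2 * ((2 * r - 1 : ℕ) : ℝ) ^ k * (C * c ^ (n - 2 * k)) := by
              gcongr
              · exact_mod_cast gam_univ_le k
              · exact hZ _
          _ = 2 * C * (((2 * r - 1 : ℕ) : ℝ) ^ k * c ^ (n - 2 * k)) := by ring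
    _ ≤ ∑ k ∈ range (n / 2 + 1), 2 * C * ((1 / 2) ^ k * c ^ n) := by
        gcongr ∑ k ∈ _, 2 * C * ?_ with k hk
        have hkn : 2 * k ≤ n := by have := mem_range.1 hk; omega
        exact pow_mul_pow_sub_le (by positivity) hc hcr hkn
    _ = 2 * C * c ^ n * ∑ k ∈ range (n / 2 + 1), (1 / 2 : ℝ) ^ k := by
        rw [mul_sum]; congr! 1 with k; ring
    _ ≤ 4 * C * c ^ n := by
        nlinarith [mul_nonneg (mul_nonneg hC (pow_nonneg hc n))
          (sub_nonneg.2 (sum_geometric_two_le (n / 2 + 1)))]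

theorem zcirc_expNegligible_general (r : ℕ) (hr : 2 ≤ r) (Z : Set (F r))
    (h : ExpNegligibleIn Z (Ur r)) :
    ExpNegligibleIn (Zcirc Z) Set.univ := by
  obtain ⟨C, hC, σ₀, hσ₀, hσ₀1, hZ⟩ := (expNegligibleIn_iff (rho_pos_of_one_mem one_mem_Ur)).1 h
  set q : ℝ := ((2 * r - 1 : ℕ) : ℝ) with hq_def
  have hq : 3 ≤ q := Nat.ofNat_le_cast.2 (by omega)
  set σ := max σ₀ (5 / 6)
  have hσq : 2 * q ≤ (σ * q) ^ 2 := by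
    have hσ : 5 / 6 ≤ σ := le_max_right _ _
    have hσ2q : 2 ≤ σ ^ 2 * q := by nlinarith
    nlinarith
  refine (expNegligibleIn_iff (rho_pos_of_one_mem (Set.mem_univ 1))).2 ⟨16 * C, by positivity, σ,
    hσ₀.trans_le (le_max_left _ _), max_lt hσ₀1 (by norm_num), fun n => ?_⟩
  have hZ' (m : ℕ) : (rho Z m : ℝ) ≤ 4 * C * (σ * q) ^ m :=
    calc (rho Z m : ℝ) ≤ C * σ₀ ^ m * rho (Ur r) m := hZ m
      _ ≤ C * σ ^ m * (4 * q ^ m) := by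
        gcongr
        · exact le_max_left _ _
        · rw [hq_def]
          exact_mod_cast (rho_mono (Set.subset_univ _) m).trans (rho_univ_le hr m)
      _ = 4 * C * (σ * q) ^ m := by ring
  calc (rho (Zcirc Z) n : ℝ) ≤ 4 * (4 * C) * (σ * q) ^ n :=
        rho_Zcirc_le_of_rho_le Z (by positivity) (by positivity) hσq hZ' n
    _ = 16 * C * σ ^ n * q ^ n := by ring
    _ ≤ 16 * C * σ ^ n * rho Set.univ n := by
        gcongr
        rw [hq_def]
        exact_mod_cast (pow_le_gam_univ n).trans (gam_le_rho _ n)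

/-- If `Z ⊆ U_r` is exponentially negligible in `U_r`, then `Z°` is
exponentially negligible in `F_r`. -/
theorem zcirc_expNegligible (r : ℕ) (hr : 2 ≤ r) (Z : Set (F r)) (hZ : Z ⊆ Ur r)
    (h : ExpNegligibleIn Z (Ur r)) :
    ExpNegligibleIn (Zcirc Z) Set.univ :=
  zcirc_expNegligible_general r hr Z h
end
end

section
/- For a nontrivial element g ∈ F_r, one has π(g) = ∞ if and only if g is primitive in F_r. -/
open scoped Classical

noncomputable section

/-!
If `g` belongs to a free basis of a free group `G` and `g ∈ H ≤ G`, then `g` belongs to a free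
basis of `H`. This falls out of the groupoid proof of Nielsen–Schreier: `H` is the vertex group at
the base coset of the action groupoid of `G` on `G ⧸ H`, which is free on the arrows labelled by
basis elements of `G`, and for a spanning tree of its generating graph the vertex group is free on
the loops made from the arrows outside the tree. As `g ∈ H`, the arrow labelled `g` is a loop at
the base coset, so it lies outside every tree, and its basis element of `H` is `g` itself.
Conversely, if `g` is not primitive in `F_r`, then `F_r` itself shows `π(g) ≤ r < ∞`.
-/

open CategoryTheory CategoryTheory.SingleObj Quiver IsFreeGroupoid IsFreeGroupoid.SpanningTree

namespace IsFreeGroupoid.SpanningTree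

universe u
variable {G : Type u} [Groupoid.{u} G] [IsFreeGroupoid G]
  (T : WideSubquiver (Symmetrify <| Generators G)) [Arborescence T]

/-- Mathlib's own copy of this, `root'`, is private. -/
def rootObj : G := show T from root T

lemma loopOfHom_of_end (x : End (rootObj T)) : loopOfHom T x = x := by
  have : treeHom T (rootObj T) = 𝟙 (rootObj T) := treeHom_root T
  simp only [loopOfHom, this]
  change 𝟙 (rootObj T) ≫ x ≫ inv (𝟙 (rootObj T)) = x
  simp

variable {T}

lemma map_homOfPath_eq_one {X : Type u} [Group X] {F : G ⥤ CategoryTheory.SingleObj X}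
    (hF : ∀ {a b : Generators G} (e : a ⟶ b), e ∈ wideSubquiverSymmetrify T a b →
      F.map (of e) = (1 : X))
    {a : G} (p : Path (root T) a) : F.map (homOfPath T p) = (1 : X) := by
  induction p with
  | nil => exact F.map_id _
  | cons p e ih =>
    erw [homOfPath.eq_2, F.map_comp, comp_as_mul, ih, mul_one]
    rcases e with ⟨e | e, eT⟩
    · exact hF e (Or.inl eT)
    · erw [F.map_inv, inv_as_inv, inv_eq_one]
      exact hF e (Or.inr eT)

lemma map_loopOfHom {X : Type u} [Group X] {F : G ⥤ CategoryTheory.SingleObj X}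
    (hF : ∀ {a b : Generators G} (e : a ⟶ b), e ∈ wideSubquiverSymmetrify T a b →
      F.map (of e) = (1 : X))
    {a b : G} (q : a ⟶ b) : F.map (loopOfHom T q) = (F.map q : X) := by
  simp only [loopOfHom, treeHom, Functor.map_comp, Functor.map_inv, comp_as_mul, inv_as_inv]
  erw [map_homOfPath_eq_one hF, map_homOfPath_eq_one hF, inv_one, one_mul, mul_one]

variable (T)

abbrev treeComplement : Set (Total (Generators G)) :=
  (wideSubquiverEquivSetTotal <| wideSubquiverSymmetrify T)ᶜ

/-- Mathlib's `endIsFree` proves this but keeps only the `Prop` `IsFreeGroup`; the basis itself is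
needed here. -/
lemma existsUnique_lift_loopOfHom {X : Type u} [Group X] (f : treeComplement T → X) :
    ∃! F : End (rootObj T) →* X, ∀ e, F (loopOfHom T (of e.val.hom)) = f e := by
  let f' : Labelling (Generators G) X := fun a b e =>
    if h : e ∈ wideSubquiverSymmetrify T a b then 1 else f ⟨⟨a, b, e⟩, h⟩
  obtain ⟨F', hF', uF'⟩ := unique_lift f'
  have hF'T : ∀ {a b : Generators G} (e : a ⟶ b), e ∈ wideSubquiverSymmetrify T a b →
      F'.map (of e) = (1 : X) := fun e he => (hF' _ _ e).trans (dif_pos he)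
  refine ⟨F'.mapEnd _, fun ⟨⟨a, b, e⟩, h⟩ => ?_, fun E hE => ?_⟩
  · erw [Functor.mapEnd_apply, map_loopOfHom hF'T, hF']
    exact dif_neg h
  · have : functorOfMonoidHom T E = F' := by
      refine uF' _ fun a b e => ?_
      change E (loopOfHom T _) = dite _ _ _
      split_ifs with h
      · rw [loopOfHom_eq_id T e h]; exact E.map_one
      · exact hE ⟨⟨a, b, e⟩, h⟩
    ext x
    exact (congrArg E (loopOfHom_of_end T x).symm).trans (congrArg (·.map x) this)

def endBasis : FreeGroupBasis (treeComplement T) (End (rootObj T)) :=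
  FreeGroupBasis.ofUniqueLift _ _ (existsUnique_lift_loopOfHom T)

lemma endBasis_apply (e : treeComplement T) : endBasis T e = loopOfHom T (of e.val.hom) :=
  FreeGroup.lift_apply_of

lemma loop_not_mem_wideSubquiverSymmetrify
    (e : @Quiver.Hom (Generators G) _ (rootObj (G := G) T) (rootObj (G := G) T)) :
    e ∉ wideSubquiverSymmetrify T _ _ := by
  have no_loop (f : root T ⟶ root T) : False := by
    have : (Path.nil : Path (root T) (root T)) = Path.nil.cons f := Subsingleton.elim _ _
    simpa using congrArg Path.length this
  rintro (h | h)
  · exact no_loop ⟨Sum.inl e, h⟩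
  · exact no_loop ⟨Sum.inr e, h⟩

end IsFreeGroupoid.SpanningTree

section Primitive

variable {G : Type} [Group G]

lemma IsPrimitive.map {K : Type} [Group K] (φ : G ≃* K) {g : G} (h : IsPrimitive g) :
    IsPrimitive (φ g) := by
  obtain ⟨ι, b, i, rfl⟩ := h
  exact ⟨ι, b.map φ, i, rfl⟩

lemma IsFreeGroup.isPrimitive_of_mem [IsFreeGroup G] {H : Subgroup G}
    (e : IsFreeGroup.Generators G) (he : IsFreeGroup.of e ∈ H) :
    IsPrimitive (⟨IsFreeGroup.of e, he⟩ : H) := by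
  let C := ActionCategory G (G ⧸ H)
  let X : C := ActionCategory.objEquiv G (G ⧸ H) ↑(1 : G)
  have : RootedConnected (show Symmetrify (IsFreeGroupoid.Generators C) from X) :=
    @generators_connected C _ ActionCategory.instIsConnectedOfIsPretransitiveOfNonempty _ X
  let T : WideSubquiver (Symmetrify (IsFreeGroupoid.Generators C)) :=
    geodesicSubtree (show Symmetrify (IsFreeGroupoid.Generators C) from X)
  have he_loop : IsFreeGroup.of e • X.back = X.back := by
    change IsFreeGroup.of e • ((1 : G) : G ⧸ H) = ((1 : G) : G ⧸ H)
    rw [MulAction.Quotient.smul_mk, smul_eq_mul, mul_one, QuotientGroup.eq]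
    simpa using inv_mem he
  let loop : @Quiver.Hom (IsFreeGroupoid.Generators C) _ (rootObj (G := C) T)
      (rootObj (G := C) T) := ⟨e, he_loop⟩
  let ψ : End (rootObj T) ≃* H := ActionCategory.endMulEquivSubgroup H
  refine ⟨_, (endBasis T).map ψ, ⟨⟨_, _, loop⟩, loop_not_mem_wideSubquiverSymmetrify T loop⟩, ?_⟩
  erw [FreeGroupBasis.map_apply, endBasis_apply,
    loopOfHom_of_end T (IsFreeGroupoid.of loop : End (rootObj T))]
  rfl

lemma FreeGroupBasis.isPrimitive_of_mem {ι : Type} (b : FreeGroupBasis ι G) {H : Subgroup G}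
    (i : ι) (hi : b i ∈ H) : IsPrimitive (⟨b i, hi⟩ : H) := by
  have : IsFreeGroup G := b.isFreeGroup
  let σ : IsFreeGroup.Generators G ≃ ι :=
    Equiv.ofFreeGroupEquiv ((IsFreeGroup.toFreeGroup G).symm.trans b.repr)
  -- `φ` carries the chosen basis of `IsFreeGroup G` onto `b`, reducing to the case of generators.
  let b' := (IsFreeGroup.basis G).reindex σ
  let φ : G ≃* G := b'.repr.trans b.repr.symm
  have hφ : φ.symm (b i) = b' i :=
    φ.symm_apply_eq.mpr (congrArg b.repr.symm (b'.repr_apply_coe i)).symm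
  have hmem : IsFreeGroup.of (σ.symm i) ∈ H.map φ.symm.toMonoidHom := ⟨b i, hi, hφ⟩
  convert (IsFreeGroup.isPrimitive_of_mem _ hmem).map (φ.symm.subgroupMap H).symm
  exact (MulEquiv.eq_symm_apply _).mpr hφ

lemma IsPrimitive.subtype_mk {g : G} (hg : IsPrimitive g) {H : Subgroup G} (hgH : g ∈ H) :
    IsPrimitive (⟨g, hgH⟩ : H) := by
  obtain ⟨ι, b, i, rfl⟩ := hg
  exact b.isPrimitive_of_mem i hgH

end Primitive

lemma primitivityRank_eq_top_of_isPrimitive {r : ℕ} {g : F r} (hg : IsPrimitive g) :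
    primitivityRank g = ⊤ :=
  sInf_eq_top.mpr fun _ ⟨_, hgH, hnot, _⟩ => (hnot (hg.subtype_mk hgH)).elim

lemma primitivityRank_le_of_not_isPrimitive {r : ℕ} {g : F r} (hg : ¬ IsPrimitive g) :
    primitivityRank g ≤ r := by
  refine sInf_le ⟨⊤, Subgroup.mem_top g, fun h => hg ?_, ?_⟩
  · simpa using h.map Subgroup.topEquiv
  · exact ⟨Fin r, (FreeGroupBasis.ofFreeGroup (Fin r)).map Subgroup.topEquiv.symm, by simp⟩

theorem primitivityRank_eq_top_iff_general (r : ℕ) (g : F r) :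
    primitivityRank g = ⊤ ↔ IsPrimitive g := by
  refine ⟨fun h => ?_, primitivityRank_eq_top_of_isPrimitive⟩
  by_contra hg
  exact ENat.natCast_ne_top r (top_le_iff.mp (h ▸ primitivityRank_le_of_not_isPrimitive hg))

/-- For a nontrivial `g ∈ F_r`, `π(g) = ∞` iff `g` is primitive in `F_r`. -/
theorem primitivityRank_eq_top_iff (r : ℕ) (hr : 2 ≤ r) (g : F r) (hg : g ≠ 1) :
    primitivityRank g = ⊤ ↔ IsPrimitive g :=
  primitivityRank_eq_top_iff_general r g
end
end
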